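/- Let λ > 0 and define g : ℝ → Matrix(2,2,ℝ) by g(t) = [[1, t],[0, 1]] · [[λ^{1/2}, 0],[0, λ^{−1/2}]] · [[cos(t/(2λ)), −sin(t/(2λ))],[sin(t/(2λ)), cos(t/(2λ))]]. Then for every t ∈ ℝ: (a) det g(t) = 1; (b) the matrix g(t)⁻¹ · g'(t) is symmetric and has trace 0; and (c) writing g(t) = [[a,b],[c,d]], one has (a·i + b)/(c·i + d) = iλ + t and (c·i + d)^{−2} = λ·e^{−it/λ}. -/

import Mathlib

/-!
Write `g(t) = n(t) a k(θ)` with `n(t) = [[1,t],[0,1]]`, `a = diag(√λ, 1/√λ)` and `k(θ)` the rotation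
by `θ = t/2λ`. Since `n' = n E` with `E = [[0,1],[0,0]]`, `k' = θ' k J` with `J = [[0,-1],[1,0]]`
commuting with `k`, we get `g' = n (E a + a J / 2λ) k = n a S k` with `S = (2λ)⁻¹ [[0,1],[1,0]]`;
the identity `E a + a J / 2λ = a S` is exactly `(√λ)² = λ`. Hence `g⁻¹ g' = kᵀ S k`, an orthogonal
conjugate of a symmetric traceless matrix.

For the action, `(i, 1)` is an eigenvector of `k(θ)` with eigenvalue `e^{iθ}`, so
`g(t) (i, 1)ᵀ = e^{iθ} (√λ i + t/√λ, 1/√λ)`; both the Möbius image of `i` and `(ci + d)⁻²` are read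
off from this vector.
-/

open Matrix

section MatrixDeriv

variable {𝕜 : Type*} [NontriviallyNormedField 𝕜] {m n p : Type*}

/-- Entrywise, so that no norm on matrices has to be chosen. -/
def HasMatrixDerivAt (A : 𝕜 → Matrix m n 𝕜) (A' : Matrix m n 𝕜) (t : 𝕜) : Prop :=
  ∀ i j, HasDerivAt (fun s => A s i j) (A' i j) t

namespace HasMatrixDerivAt

variable {A : 𝕜 → Matrix m n 𝕜} {A' : Matrix m n 𝕜} {t : 𝕜}

theorem deriv (h : HasMatrixDerivAt A A' t) :
    (Matrix.of fun i j => deriv (fun s => A s i j) t) = A' :=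
  Matrix.ext fun i j => (h i j).deriv

theorem congr_deriv (h : HasMatrixDerivAt A A' t) {A'' : Matrix m n 𝕜} (h' : A' = A'') :
    HasMatrixDerivAt A A'' t :=
  h' ▸ h

theorem const (M : Matrix m n 𝕜) (t : 𝕜) : HasMatrixDerivAt (fun _ => M) 0 t :=
  fun i j => hasDerivAt_const t (M i j)

theorem mul [Fintype n] {B : 𝕜 → Matrix n p 𝕜} {B' : Matrix n p 𝕜}
    (hA : HasMatrixDerivAt A A' t) (hB : HasMatrixDerivAt B B' t) :
    HasMatrixDerivAt (fun s => A s * B s) (A' * B t + A t * B') t := by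
  intro i k
  simp only [mul_apply, Matrix.add_apply, ← Finset.sum_add_distrib]
  exact HasDerivAt.fun_sum fun j _ => (hA i j).fun_mul (hB j k)

end HasMatrixDerivAt

end MatrixDeriv

open Real in
noncomputable def rotationMatrix (θ : ℝ) : Matrix (Fin 2) (Fin 2) ℝ :=
  !![cos θ, -sin θ; sin θ, cos θ]

theorem det_rotationMatrix (θ : ℝ) : (rotationMatrix θ).det = 1 := by
  simp [rotationMatrix, det_fin_two_of, ← sq, Real.cos_sq_add_sin_sq]

theorem rotationMatrix_mul_transpose (θ : ℝ) : rotationMatrix θ * (rotationMatrix θ)ᵀ = 1 := by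
  ext i j
  fin_cases i <;> fin_cases j <;> simp [rotationMatrix, mul_apply, Fin.sum_univ_two, ← sq, mul_comm]

theorem hasMatrixDerivAt_rotationMatrix {θ : ℝ → ℝ} {θ' t : ℝ} (hθ : HasDerivAt θ θ' t) :
    HasMatrixDerivAt (fun s => rotationMatrix (θ s))
      (θ' • (rotationMatrix (θ t) * !![0, -1; 1, 0])) t := by
  have hval : θ' • (rotationMatrix (θ t) * !![0, -1; 1, 0]) =
      !![-Real.sin (θ t) * θ', -(Real.cos (θ t) * θ'); Real.cos (θ t) * θ', -Real.sin (θ t) * θ'] := by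
    ext i j
    fin_cases i <;> fin_cases j <;> simp [rotationMatrix, mul_comm]
  rw [hval]
  intro i j
  fin_cases i <;> fin_cases j
  exacts [hθ.cos, hθ.sin.neg, hθ.sin, hθ.cos]

theorem rotationMatrix_map_mulVec_I (θ : ℝ) :
    (rotationMatrix θ).map Complex.ofRealHom *ᵥ ![Complex.I, 1] =
      Complex.exp (θ * Complex.I) • ![Complex.I, 1] := by
  ext i
  fin_cases i <;>
    simp [rotationMatrix, mulVec, dotProduct, Fin.sum_univ_two, Complex.exp_mul_I, add_mul,
      mul_assoc, add_comm]

theorem map_ofReal_mulVec_I_apply (M : Matrix (Fin 2) (Fin 2) ℝ) (i : Fin 2) :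
    (M.map Complex.ofRealHom *ᵥ ![Complex.I, 1]) i = (M i 0 : ℂ) * Complex.I + (M i 1 : ℂ) := by
  simp [mulVec, dotProduct, Fin.sum_univ_two]

theorem Matrix.IsSymm.transpose_mul_mul {m n α : Type*} [Fintype n] [CommSemiring α]
    {S : Matrix n n α} (hS : S.IsSymm) (A : Matrix n m α) : (Aᵀ * S * A).IsSymm := by
  simp [IsSymm, transpose_mul, hS.eq, Matrix.mul_assoc]

section Horocycle

open Complex

noncomputable def horocycleLift (lam t : ℝ) : Matrix (Fin 2) (Fin 2) ℝ :=
  !![1, t; 0, 1] * !![√lam, 0; 0, (√lam)⁻¹] * rotationMatrix (t / (2 * lam))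

noncomputable def horocycleVelocity (lam t : ℝ) : Matrix (Fin 2) (Fin 2) ℝ :=
  (rotationMatrix (t / (2 * lam)))ᵀ * ((2 * lam)⁻¹ • !![0, 1; 1, 0]) * rotationMatrix (t / (2 * lam))

variable {lam : ℝ}

theorem det_horocycleLift (hlam : 0 < lam) (t : ℝ) : (horocycleLift lam t).det = 1 := by
  have hs : √lam ≠ 0 := (Real.sqrt_pos.2 hlam).ne'
  rw [horocycleLift, det_mul, det_mul, det_rotationMatrix]
  simp [det_fin_two_of, hs]

theorem isSymm_horocycleVelocity (lam t : ℝ) : (horocycleVelocity lam t).IsSymm :=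
  IsSymm.transpose_mul_mul ((IsSymm.ext fun i j => by fin_cases i <;> fin_cases j <;> rfl).smul _) _

theorem trace_horocycleVelocity (lam t : ℝ) : (horocycleVelocity lam t).trace = 0 := by
  rw [horocycleVelocity, trace_mul_cycle, rotationMatrix_mul_transpose, Matrix.one_mul]
  simp [trace_fin_two]

theorem hasMatrixDerivAt_horocycleLift (hlam : 0 < lam) (t : ℝ) :
    HasMatrixDerivAt (horocycleLift lam) (horocycleLift lam t * horocycleVelocity lam t) t := by
  set N : Matrix (Fin 2) (Fin 2) ℝ := !![1, t; 0, 1]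
  set D : Matrix (Fin 2) (Fin 2) ℝ := !![√lam, 0; 0, (√lam)⁻¹]
  set R := rotationMatrix (t / (2 * lam))
  set E : Matrix (Fin 2) (Fin 2) ℝ := !![0, 1; 0, 0]
  set J : Matrix (Fin 2) (Fin 2) ℝ := !![0, -1; 1, 0]
  set S : Matrix (Fin 2) (Fin 2) ℝ := (2 * lam)⁻¹ • !![0, 1; 1, 0]
  have hN : HasMatrixDerivAt (fun s => !![1, s; 0, 1]) E t := by
    intro i j
    fin_cases i <;> fin_cases j <;> simp [E, hasDerivAt_id', hasDerivAt_const]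
  have hθ : HasDerivAt (fun s => s / (2 * lam)) (2 * lam)⁻¹ t := by
    simpa using (hasDerivAt_id' t).div_const (2 * lam)
  have hg : HasMatrixDerivAt (horocycleLift lam)
      ((E * D + N * 0) * R + N * D * ((2 * lam)⁻¹ • (R * J))) t :=
    (hN.mul (.const D t)).mul (hasMatrixDerivAt_rotationMatrix hθ)
  have hNE : N * E = E := by
    ext i j; fin_cases i <;> fin_cases j <;> simp [N, E]
  have hRJ : R * J = J * R := by
    ext i j; fin_cases i <;> fin_cases j <;> simp [R, J, rotationMatrix]
  have hDS : E * D + (2 * lam)⁻¹ • (D * J) = D * S := by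
    have hs : √lam ≠ 0 := (Real.sqrt_pos.2 hlam).ne'
    have hkey : (√lam)⁻¹ - (2 * lam)⁻¹ * √lam = √lam * (2 * lam)⁻¹ := by
      field_simp
      linear_combination -2 * Real.sq_sqrt hlam.le
    ext i j
    fin_cases i <;> fin_cases j
    · simp [D, E, J, S]
    · simp [D, E, J, S]
      linear_combination hkey
    · simp [D, E, J, S, mul_comm]
    · simp [D, E, J, S]
  refine hg.congr_deriv (Eq.symm ?_)
  change N * D * R * (Rᵀ * S * R) = _
  have hRRt : R * Rᵀ = 1 := rotationMatrix_mul_transpose _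
  clear_value N D R E J S
  calc N * D * R * (Rᵀ * S * R) = N * (D * S) * R := by
        simp only [← Matrix.mul_assoc, Matrix.mul_assoc _ R, hRRt, Matrix.mul_one]
    _ = N * (E * D + (2 * lam)⁻¹ • (D * J)) * R := by rw [hDS]
    _ = (E * D + N * 0) * R + N * D * ((2 * lam)⁻¹ • (R * J)) := by
        rw [hRJ]
        conv_rhs => rw [← hNE]
        simp only [Matrix.mul_add, Matrix.add_mul, Matrix.mul_smul, Matrix.smul_mul,
          Matrix.mul_assoc, Matrix.mul_zero, add_zero]

theorem horocycleLift_map_mulVec_I (lam t : ℝ) :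
    (horocycleLift lam t).map ofRealHom *ᵥ ![I, 1] =
      exp (↑(t / (2 * lam)) * I) • ![√lam * I + t / √lam, (√lam : ℂ)⁻¹] := by
  rw [horocycleLift, Matrix.map_mul, Matrix.map_mul, ← mulVec_mulVec, rotationMatrix_map_mulVec_I,
    mulVec_smul, ← mulVec_mulVec]
  congr 1
  ext i
  fin_cases i <;> simp [mulVec, dotProduct, Fin.sum_univ_two, div_eq_mul_inv]

theorem horocycleLift_mobius_I (hlam : 0 < lam) (t : ℝ) :
    ((horocycleLift lam t 0 0 : ℂ) * I + (horocycleLift lam t 0 1 : ℂ)) /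
        ((horocycleLift lam t 1 0 : ℂ) * I + (horocycleLift lam t 1 1 : ℂ)) = I * lam + t := by
  have hs : (√lam : ℂ) ≠ 0 := by exact_mod_cast (Real.sqrt_pos.2 hlam).ne'
  have hs2 : (√lam : ℂ) ^ 2 = lam := by exact_mod_cast Real.sq_sqrt hlam.le
  rw [← map_ofReal_mulVec_I_apply, ← map_ofReal_mulVec_I_apply, horocycleLift_map_mulVec_I]
  simp only [Pi.smul_apply, smul_eq_mul, mul_div_mul_left _ _ (exp_ne_zero _), cons_val_zero,
    cons_val_one, cons_val_fin_one, div_inv_eq_mul]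
  field_simp
  linear_combination I * hs2

theorem horocycleLift_automorphyFactor_I (hlam : 0 < lam) (t : ℝ) :
    ((horocycleLift lam t 1 0 : ℂ) * I + (horocycleLift lam t 1 1 : ℂ)) ^ (-2 : ℤ) =
      lam * exp (-(I * t / lam)) := by
  have hlam' : (lam : ℂ) ≠ 0 := by exact_mod_cast hlam.ne'
  have hs2 : (√lam : ℂ) ^ 2 = lam := by exact_mod_cast Real.sq_sqrt hlam.le
  rw [← map_ofReal_mulVec_I_apply, horocycleLift_map_mulVec_I, Pi.smul_apply, smul_eq_mul,
    cons_val_one, cons_val_fin_one, _root_.zpow_neg, zpow_ofNat, mul_pow, inv_pow, hs2, ← exp_nat_mul,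
    mul_inv, inv_inv, ← exp_neg, mul_comm]
  congr 2
  push_cast
  field_simp

end Horocycle

/-- the curve
`g(t) = [[1,t],[0,1]]·[[λ^{1/2},0],[0,λ^{−1/2}]]·[[cos(t/2λ), −sin(t/2λ)],[sin(t/2λ), cos(t/2λ)]]`
has `det g(t) = 1`, `g(t)⁻¹g'(t)` symmetric and traceless (horizontality), and
`g(t)·(i,1) = (iλ + t, λe^{−it/λ})` under the fractional-linear action. -/
theorem stmt15 (lam : ℝ) (hlam : 0 < lam) (g : ℝ → Matrix (Fin 2) (Fin 2) ℝ)
    (hg : ∀ t : ℝ, g t =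
      !![1, t; 0, 1] *
      !![Real.sqrt lam, 0; 0, (Real.sqrt lam)⁻¹] *
      !![Real.cos (t / (2 * lam)), -Real.sin (t / (2 * lam));
         Real.sin (t / (2 * lam)), Real.cos (t / (2 * lam))]) :
    ∀ t : ℝ,
      (g t).det = 1 ∧
      ((g t)⁻¹ * Matrix.of fun i j => deriv (fun s => g s i j) t).IsSymm ∧
      Matrix.trace ((g t)⁻¹ * Matrix.of fun i j => deriv (fun s => g s i j) t) = 0 ∧
      (((g t 0 0 : ℝ) : ℂ) * Complex.I + ((g t 0 1 : ℝ) : ℂ)) /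
          (((g t 1 0 : ℝ) : ℂ) * Complex.I + ((g t 1 1 : ℝ) : ℂ))
        = Complex.I * lam + t ∧
      (((g t 1 0 : ℝ) : ℂ) * Complex.I + ((g t 1 1 : ℝ) : ℂ)) ^ (-2 : ℤ)
        = (lam : ℂ) * Complex.exp (-(Complex.I * t / lam)) := by
  obtain rfl : g = horocycleLift lam := funext hg
  intro t
  have hdet := det_horocycleLift hlam t
  have hvel : (horocycleLift lam t)⁻¹ *
      (Matrix.of fun i j => deriv (fun s => horocycleLift lam s i j) t) = horocycleVelocity lam t := by
    rw [(hasMatrixDerivAt_horocycleLift hlam t).deriv]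
    exact nonsing_inv_mul_cancel_left _ _ (hdet ▸ isUnit_one)
  rw [hvel]
  exact ⟨hdet, isSymm_horocycleVelocity lam t, trace_horocycleVelocity lam t,
    horocycleLift_mobius_I hlam t, horocycleLift_automorphyFactor_I hlam t⟩
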